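/- Let g_α(t) = c_α (t − α)₊ with c_α = (1 − Φ(α))^{−1/2} and α ≥ 2, and let ζ ∼ N(0,1). Then med(g_α(ζ)) = 0 and for all t > 0, P(g_α(ζ) − med(g_α) > t √(Var g_α(ζ))) ≤ 1 − Φ(α + c t / (α c_α)) for a universal constant c > 0; in particular, for t ≪ α the probability is at most 1 − Φ(α), so no super-Gaussian lower bound of the form exp(−Ct²) can hold in the range t ≪ 1/s(g_α). -/

import Mathlib

open MeasureTheory ProbabilityTheory Real

/-- The standard Gaussian measure on `ℝ`. -/
noncomputable def stdGaussianR : Measure ℝ := gaussianReal 0 1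

/-- The standard normal cumulative distribution function. -/
noncomputable def Phi (x : ℝ) : ℝ := (stdGaussianR (Set.Iic x)).toReal

/-- `m` is a median of `f` under `μ`. -/
def IsMedian {Ω : Type*} [MeasurableSpace Ω] (μ : Measure Ω) (f : Ω → ℝ) (m : ℝ) : Prop :=
  (1 : ENNReal) / 2 ≤ μ {x | f x ≤ m} ∧ (1 : ENNReal) / 2 ≤ μ {x | m ≤ f x}

instance : IsProbabilityMeasure stdGaussianR := by
  unfold stdGaussianR; infer_instance

lemma stdG_ne_top (s : Set ℝ) : stdGaussianR s ≠ ⊤ := measure_ne_top _ s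

lemma pdf_eq (x : ℝ) : gaussianPDFReal 0 1 x = (Real.sqrt (2*π))⁻¹ * Real.exp (-x^2/2) := by
  simp [gaussianPDFReal]

lemma stdG_toReal (s : Set ℝ) (hs : MeasurableSet s) :
    (stdGaussianR s).toReal = ∫ x in s, gaussianPDFReal 0 1 x := by
  rw [stdGaussianR, gaussianReal_apply_eq_integral 0 one_ne_zero s, ENNReal.toReal_ofReal]
  exact setIntegral_nonneg hs fun x _ => gaussianPDFReal_nonneg 0 1 x

lemma Phi_mono {a b : ℝ} (h : a ≤ b) : Phi a ≤ Phi b :=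
  ENNReal.toReal_mono (stdG_ne_top _) (measure_mono (Set.Iic_subset_Iic.2 h))

lemma one_sub_Phi (a : ℝ) : 1 - Phi a = (stdGaussianR (Set.Ioi a)).toReal := by
  have : stdGaussianR (Set.Ioi a) = 1 - stdGaussianR (Set.Iic a) := by
    rw [← Set.compl_Iic, measure_compl measurableSet_Iic (stdG_ne_top _), measure_univ]
  rw [this, ENNReal.toReal_sub_of_le prob_le_one ENNReal.one_ne_top, ENNReal.toReal_one, Phi]

lemma Ioi_pos (a : ℝ) : 0 < (stdGaussianR (Set.Ioi a)).toReal := by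
  refine ENNReal.toReal_pos ?_ (stdG_ne_top _)
  intro h
  have := gaussianReal_absolutelyContinuous' 0 one_ne_zero
    (show stdGaussianR (Set.Ioi a) = 0 from h)
  simp [Real.volume_Ioi] at this

lemma Q_pos (a : ℝ) : 0 < 1 - Phi a := by rw [one_sub_Phi]; exact Ioi_pos a

lemma Phi_zero : Phi 0 = 1/2 := by
  have hmap : stdGaussianR.map (fun x => (-1 : ℝ) * x) = stdGaussianR := by
    unfold stdGaussianR
    rw [show (fun x => (-1:ℝ)*x) = (((-1):ℝ) * ·) from rfl, gaussianReal_map_const_mul]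
    have h1 : (⟨(-1:ℝ)^2, sq_nonneg _⟩ : NNReal) = 1 := by ext; norm_num
    rw [mul_zero]; congr 1; ext; simp
  have hIci : stdGaussianR (Set.Ici 0) = stdGaussianR (Set.Iic 0) := by
    conv_rhs => rw [← hmap]
    rw [Measure.map_apply (by fun_prop) measurableSet_Iic]
    congr 1
    ext x
    simp
  have hsing : stdGaussianR ({0} : Set ℝ) = 0 :=
    gaussianReal_absolutelyContinuous 0 one_ne_zero Real.volume_singleton
  have hIoi : stdGaussianR (Set.Ioi 0) = stdGaussianR (Set.Ici 0) := by
    have : Set.Ici (0:ℝ) = {0} ∪ Set.Ioi 0 := by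
      ext x; simp [le_iff_lt_or_eq, eq_comm]
    rw [this, measure_union (Set.disjoint_singleton_left.mpr (by simp)) measurableSet_Ioi,
      hsing, zero_add]
  have h1 : (1:ℝ) - Phi 0 = Phi 0 := by
    rw [one_sub_Phi, hIoi, hIci, Phi]
  linarith

lemma pdf_anti {a x : ℝ} (h0 : 0 ≤ a) (hax : a ≤ x) :
    gaussianPDFReal 0 1 x ≤ gaussianPDFReal 0 1 a := by
  rw [pdf_eq, pdf_eq]
  apply mul_le_mul_of_nonneg_left _ (by positivity)
  apply Real.exp_le_exp.2
  nlinarith [sq_nonneg (x - a), sq_nonneg (x + a)]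

lemma Ioc_le (a b : ℝ) (h0 : 0 ≤ a) (hab : a ≤ b) :
    (stdGaussianR (Set.Ioc a b)).toReal ≤ (b - a) * gaussianPDFReal 0 1 a := by
  rw [stdG_toReal _ measurableSet_Ioc]
  calc ∫ x in Set.Ioc a b, gaussianPDFReal 0 1 x
      ≤ ∫ _ in Set.Ioc a b, gaussianPDFReal 0 1 a := by
        apply setIntegral_mono_on (integrable_gaussianPDFReal 0 1).integrableOn
          (integrableOn_const (by simp [Real.volume_Ioc]))
          measurableSet_Ioc
        exact fun x hx => pdf_anti h0 (le_of_lt hx.1)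
    _ = (b - a) * gaussianPDFReal 0 1 a := by
        rw [setIntegral_const, Real.volume_real_Ioc_of_le hab, smul_eq_mul]

lemma Ioc_ge (a b : ℝ) (h0 : 0 ≤ a) (hab : a ≤ b) :
    gaussianPDFReal 0 1 b * (b - a) ≤ (stdGaussianR (Set.Ioc a b)).toReal := by
  rw [stdG_toReal _ measurableSet_Ioc]
  have := setIntegral_ge_of_const_le (μ := volume) (c := gaussianPDFReal 0 1 b)
    measurableSet_Ioc (by simp [Real.volume_Ioc])
    (fun x hx => pdf_anti (le_trans h0 (le_of_lt hx.1)) hx.2)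
    (integrable_gaussianPDFReal 0 1).integrableOn
  rw [Real.volume_real_Ioc_of_le hab, smul_eq_mul] at this
  linarith

lemma tail_ratio {α : ℝ} (hα : 2 ≤ α) :
    (stdGaussianR (Set.Ioi α)).toReal ≤ 28 * (stdGaussianR (Set.Ioi (α + 1/α))).toReal := by
  have hα0 : (0:ℝ) < α := by linarith
  have hinv : (0:ℝ) < 1/α := by positivity
  obtain ⟨β, hβ⟩ : ∃ β, β = α + 1/α := ⟨_, rfl⟩
  have hβge : α ≤ β := by rw [hβ]; linarith
  have hβpos : (0:ℝ) < β := by linarith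
  have hsplit : (stdGaussianR (Set.Ioi α)).toReal
      = (stdGaussianR (Set.Ioc α β)).toReal + (stdGaussianR (Set.Ioi β)).toReal := by
    rw [← ENNReal.toReal_add (stdG_ne_top _) (stdG_ne_top _), ← measure_union
      (Set.Ioc_disjoint_Ioi le_rfl) measurableSet_Ioi, Set.Ioc_union_Ioi_eq_Ioi hβge]
  have hI1 : (stdGaussianR (Set.Ioc α β)).toReal ≤ (1/α) * gaussianPDFReal 0 1 α := by
    have := Ioc_le α β (by linarith) hβge
    rw [hβ] at this ⊢
    simpa using this
  have hr : (1/α) * (Real.exp (-3) * gaussianPDFReal 0 1 α)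
      ≤ (stdGaussianR (Set.Ioi β)).toReal := by
    have h1 : gaussianPDFReal 0 1 (β + 1/α) * ((β + 1/α) - β)
        ≤ (stdGaussianR (Set.Ioc β (β + 1/α))).toReal :=
      Ioc_ge β (β + 1/α) (le_of_lt hβpos) (by linarith)
    have h2 : (stdGaussianR (Set.Ioc β (β + 1/α))).toReal
        ≤ (stdGaussianR (Set.Ioi β)).toReal :=
      ENNReal.toReal_mono (stdG_ne_top _) (measure_mono Set.Ioc_subset_Ioi_self)
    have h3 : Real.exp (-3) * gaussianPDFReal 0 1 α ≤ gaussianPDFReal 0 1 (β + 1/α) := by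
      rw [pdf_eq, pdf_eq]
      rw [mul_comm (Real.exp (-3)), mul_assoc, ← Real.exp_add]
      apply mul_le_mul_of_nonneg_left _ (by positivity)
      apply Real.exp_le_exp.2
      have hβ2 : β + 1/α = α + 2/α := by rw [hβ]; ring
      rw [hβ2]
      have h4 : (α + 2/α)^2 = α^2 + 4 + 4/α^2 := by field_simp; ring
      have h5 : 4/α^2 ≤ 1 := by
        rw [div_le_one (by positivity)]; nlinarith
      nlinarith
    calc (1/α) * (Real.exp (-3) * gaussianPDFReal 0 1 α)
        ≤ (1/α) * gaussianPDFReal 0 1 (β + 1/α) := by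
          apply mul_le_mul_of_nonneg_left h3 (by positivity)
      _ = gaussianPDFReal 0 1 (β + 1/α) * ((β + 1/α) - β) := by ring
      _ ≤ _ := le_trans h1 h2
  have hexp : Real.exp 3 ≤ 27 := by
    have h1 : Real.exp 3 = (Real.exp 1)^3 := by
      rw [← Real.exp_nat_mul]; norm_num
    rw [h1]
    calc (Real.exp 1)^3 ≤ (2.7182818286)^3 :=
          pow_le_pow_left₀ (le_of_lt (Real.exp_pos 1)) Real.exp_one_lt_d9.le 3
      _ ≤ 27 := by norm_num
  have hpos : 0 ≤ gaussianPDFReal 0 1 α := gaussianPDFReal_nonneg 0 1 α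
  have key : (1/α) * gaussianPDFReal 0 1 α ≤ 27 * (stdGaussianR (Set.Ioi β)).toReal := by
    calc (1/α) * gaussianPDFReal 0 1 α
        = Real.exp 3 * ((1/α) * (Real.exp (-3) * gaussianPDFReal 0 1 α)) := by
          rw [show Real.exp 3 * ((1/α) * (Real.exp (-3) * gaussianPDFReal 0 1 α))
            = (Real.exp 3 * Real.exp (-3)) * ((1/α) * gaussianPDFReal 0 1 α) by ring,
            ← Real.exp_add]
          norm_num
      _ ≤ Real.exp 3 * (stdGaussianR (Set.Ioi β)).toReal := by
          apply mul_le_mul_of_nonneg_left hr (le_of_lt (Real.exp_pos 3))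
      _ ≤ 27 * (stdGaussianR (Set.Ioi β)).toReal := by
          apply mul_le_mul_of_nonneg_right hexp ENNReal.toReal_nonneg
  have hnn : (0:ℝ) ≤ (stdGaussianR (Set.Ioi β)).toReal := ENNReal.toReal_nonneg
  rw [← hβ]
  linarith [hsplit, hI1, key]

lemma integrable_poly_aux (s : ℝ) (hs : -1 < s) :
    Integrable (fun x : ℝ => x ^ s) stdGaussianR := by
  rw [stdGaussianR, gaussianReal_of_var_ne_zero 0 one_ne_zero,
    integrable_withDensity_iff (measurable_gaussianPDF 0 1)
      (ae_of_all _ fun x => ENNReal.ofReal_lt_top)]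
  have h1 : ∀ x : ℝ, (gaussianPDF 0 1 x).toReal = gaussianPDFReal 0 1 x := fun x => by
    rw [gaussianPDF, ENNReal.toReal_ofReal (gaussianPDFReal_nonneg 0 1 x)]
  have h2 : Integrable (fun x : ℝ => (Real.sqrt (2*π))⁻¹ * (x ^ s * Real.exp (-(1/2) * x^2)))
      volume := (integrable_rpow_mul_exp_neg_mul_sq (by norm_num : (0:ℝ) < 1/2) hs).const_mul _
  refine h2.congr (ae_of_all _ fun x => ?_)
  simp only
  rw [h1, pdf_eq]
  ring_nf

lemma integrable_xsq : Integrable (fun x : ℝ => x ^ 2) stdGaussianR := by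
  have := integrable_poly_aux 2 (by norm_num)
  refine this.congr (ae_of_all _ fun x => ?_)
  simp only
  rw [show ((2:ℝ)) = ((2:ℕ):ℝ) by norm_num, Real.rpow_natCast x 2]

lemma integrable_x : Integrable (fun x : ℝ => x) stdGaussianR := by
  have := integrable_poly_aux 1 (by norm_num)
  refine this.congr (ae_of_all _ fun x => ?_)
  simp only
  rw [show ((1:ℝ)) = ((1:ℕ):ℝ) by norm_num, Real.rpow_natCast x 1, pow_one]

lemma memLp_f (k α : ℝ) : MemLp (fun x => k * max (x - α) 0) 2 stdGaussianR := by
  have cont : Continuous (fun x : ℝ => k * max (x - α) 0) :=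
    continuous_const.mul ((continuous_id.sub continuous_const).max continuous_const)
  rw [memLp_two_iff_integrable_sq cont.aestronglyMeasurable]
  have hg : Integrable (fun x : ℝ => (k^2 * x^2 - 2*k^2*α*x) + k^2*α^2) stdGaussianR :=
    ((integrable_xsq.const_mul _).sub (integrable_x.const_mul _)).add (integrable_const _)
  refine hg.mono (cont.pow 2).aestronglyMeasurable (ae_of_all _ fun x => ?_)
  have h1 : (k * max (x - α) 0)^2 ≤ k^2 * (x - α)^2 := by
    rw [mul_pow]
    rcases le_or_gt (x - α) 0 with h | h
    · rw [max_eq_right h]; nlinarith [sq_nonneg k, sq_nonneg (x-α)]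
    · rw [max_eq_left h.le]
  have h2 : k^2 * (x - α)^2 = (k^2 * x^2 - 2*k^2*α*x) + k^2*α^2 := by ring
  rw [Real.norm_eq_abs, Real.norm_eq_abs, abs_of_nonneg (sq_nonneg _)]
  calc (k * max (x - α) 0)^2 ≤ k^2 * (x - α)^2 := h1
    _ ≤ |(k^2 * x^2 - 2*k^2*α*x) + k^2*α^2| := by rw [← h2]; exact le_abs_self _

lemma var_lower {α : ℝ} (hα : 2 ≤ α) :
    1/(112*α^2) ≤ variance (fun x => (Real.sqrt (1 - Phi α))⁻¹ * max (x - α) 0) stdGaussianR := by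
  have hα0 : (0:ℝ) < α := by linarith
  have hQ : 0 < 1 - Phi α := Q_pos α
  obtain ⟨Q, hQdef⟩ : ∃ Q, Q = 1 - Phi α := ⟨_, rfl⟩
  obtain ⟨k, hkdef⟩ : ∃ k, k = (Real.sqrt Q)⁻¹ := ⟨_, rfl⟩
  rw [← hQdef] at hQ ⊢
  rw [← hkdef]
  have hsq : 0 < Real.sqrt Q := Real.sqrt_pos.2 hQ
  have hk : 0 < k := by rw [hkdef]; exact inv_pos.2 hsq
  have hmem := memLp_f k α
  obtain ⟨m, hmdef⟩ : ∃ m, m = ∫ y, k * max (y - α) 0 ∂stdGaussianR := ⟨_, rfl⟩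
  have hvar : variance (fun x => k * max (x - α) 0) stdGaussianR
      = ∫ x, (k * max (x - α) 0 - m)^2 ∂stdGaussianR := by
    rw [variance_eq_integral hmem.aestronglyMeasurable.aemeasurable, hmdef]
  have hG : Integrable (fun x => (k * max (x - α) 0 - m)^2) stdGaussianR := by
    have := (hmem.sub (memLp_const m)).integrable_sq
    exact this.congr (ae_of_all _ fun x => rfl)
  have hr_pos : 0 < (stdGaussianR (Set.Ioi (α + 1/α))).toReal := Ioi_pos _
  have hrQ : (stdGaussianR (Set.Ioi (α + 1/α))).toReal ≤ Q := by
    rw [hQdef, one_sub_Phi]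
    exact ENNReal.toReal_mono (stdG_ne_top _)
      (measure_mono (Set.Ioi_subset_Ioi (le_add_of_nonneg_right (by positivity))))
  have hΦhalf : (1:ℝ)/2 ≤ Phi α := Phi_zero ▸ Phi_mono (by linarith)
  have hQhalf : Q ≤ 1/2 := by rw [hQdef]; linarith
  have hrΦ : (stdGaussianR (Set.Ioi (α + 1/α))).toReal ≤ Phi α := by linarith
  have hQr : Q ≤ 28 * (stdGaussianR (Set.Ioi (α + 1/α))).toReal := by
    rw [hQdef, one_sub_Phi]
    exact tail_ratio hα
  have hb : (0:ℝ) < k/(2*α) := by positivity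
  have key : (k/(2*α))^2 * (stdGaussianR (Set.Ioi (α + 1/α))).toReal
      ≤ variance (fun x => k * max (x - α) 0) stdGaussianR := by
    rcases le_or_gt m (k/(2*α)) with hm | hm
    · have h1 : ∀ x ∈ Set.Ioi (α + 1/α), (k/(2*α))^2 ≤ (k * max (x - α) 0 - m)^2 := by
        intro x hx
        rw [Set.mem_Ioi] at hx
        have hx1 : 1/α ≤ x - α := by linarith
        have hα1 : (0:ℝ) < 1/α := by positivity
        have hmax : max (x - α) 0 = x - α := max_eq_left (by linarith)
        have hfx : k/α ≤ k * max (x - α) 0 := by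
          rw [hmax]
          calc k/α = k * (1/α) := by ring
            _ ≤ k * (x - α) := mul_le_mul_of_nonneg_left hx1 hk.le
        have hhalf : k/(2*α) + k/(2*α) = k/α := by field_simp; ring
        have : k/(2*α) ≤ k * max (x - α) 0 - m := by linarith
        exact pow_le_pow_left₀ hb.le this 2
      calc (k/(2*α))^2 * (stdGaussianR (Set.Ioi (α + 1/α))).toReal
          ≤ ∫ x in Set.Ioi (α + 1/α), (k * max (x - α) 0 - m)^2 ∂stdGaussianR :=
            (mul_comm _ _).trans_le (setIntegral_ge_of_const_le measurableSet_Ioi (stdG_ne_top _) h1 hG.integrableOn)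
        _ ≤ ∫ x, (k * max (x - α) 0 - m)^2 ∂stdGaussianR :=
            setIntegral_le_integral hG (ae_of_all _ fun x => sq_nonneg _)
        _ = _ := hvar.symm
    · have h1 : ∀ x ∈ Set.Iic α, (k/(2*α))^2 ≤ (k * max (x - α) 0 - m)^2 := by
        intro x hx
        rw [Set.mem_Iic] at hx
        have hmax : max (x - α) 0 = 0 := max_eq_right (by linarith)
        rw [hmax, mul_zero, zero_sub, neg_sq]
        exact pow_le_pow_left₀ hb.le hm.le 2
      calc (k/(2*α))^2 * (stdGaussianR (Set.Ioi (α + 1/α))).toReal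
          ≤ (k/(2*α))^2 * Phi α := mul_le_mul_of_nonneg_left hrΦ (sq_nonneg _)
        _ = (k/(2*α))^2 * (stdGaussianR (Set.Iic α)).toReal := by rw [Phi]
        _ ≤ ∫ x in Set.Iic α, (k * max (x - α) 0 - m)^2 ∂stdGaussianR :=
            (mul_comm _ _).trans_le (setIntegral_ge_of_const_le measurableSet_Iic (stdG_ne_top _) h1 hG.integrableOn)
        _ ≤ ∫ x, (k * max (x - α) 0 - m)^2 ∂stdGaussianR :=
            setIntegral_le_integral hG (ae_of_all _ fun x => sq_nonneg _)
        _ = _ := hvar.symm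
  have hk2 : k^2 = Q⁻¹ := by
    rw [hkdef, inv_pow, Real.sq_sqrt hQ.le]
  have final : 1/(112*α^2) ≤ (k/(2*α))^2 * (stdGaussianR (Set.Ioi (α + 1/α))).toReal := by
    have h1 : (k/(2*α))^2 * (Q/28) ≤ (k/(2*α))^2 * (stdGaussianR (Set.Ioi (α + 1/α))).toReal :=
      mul_le_mul_of_nonneg_left (by linarith) (sq_nonneg _)
    have h2 : (k/(2*α))^2 * (Q/28) = 1/(112*α^2) := by
      rw [div_pow, hk2]
      field_simp
      ring
    linarith
  linarith

/-- For `g_α(t) = c_α (t − α)₊` with `c_α = (1 − Φ(α))^{−1/2}` and `α ≥ 2`: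
`med(g_α(ζ)) = 0`, and there is a universal constant `c > 0` such that for all `t > 0`,
`P(g_α(ζ) − med(g_α) > t √(Var g_α(ζ))) ≤ 1 − Φ(α + c t/(α c_α))`; so no super-Gaussian
lower bound holds in the range `t ≪ 1/s(g_α)`. -/
theorem stmt19 :
    ∃ c > (0 : ℝ), ∀ α : ℝ, 2 ≤ α →
      IsMedian stdGaussianR (fun t => (Real.sqrt (1 - Phi α))⁻¹ * max (t - α) 0) 0 ∧
      ∀ t > (0 : ℝ),
        (stdGaussianR {x | (Real.sqrt (1 - Phi α))⁻¹ * max (x - α) 0 - 0 >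
            t * Real.sqrt (variance
              (fun s => (Real.sqrt (1 - Phi α))⁻¹ * max (s - α) 0) stdGaussianR)}).toReal ≤
          1 - Phi (α + c * t / (α * (Real.sqrt (1 - Phi α))⁻¹)) := by
  refine ⟨1/11, by norm_num, fun α hα => ?_⟩
  have hα0 : (0:ℝ) < α := by linarith
  have hQ : 0 < 1 - Phi α := Q_pos α
  have hsq : 0 < Real.sqrt (1 - Phi α) := Real.sqrt_pos.2 hQ
  have hk : 0 < (Real.sqrt (1 - Phi α))⁻¹ := inv_pos.2 hsq
  constructor
  · constructor
    · have hset : {x : ℝ | (Real.sqrt (1 - Phi α))⁻¹ * max (x - α) 0 ≤ 0} = Set.Iic α := by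
        ext x
        simp only [Set.mem_setOf_eq, Set.mem_Iic]
        constructor
        · intro h
          by_contra hx
          push_neg at hx
          have h1 : 0 < max (x - α) 0 := by rw [max_eq_left (by linarith)]; linarith
          nlinarith
        · intro h
          rw [max_eq_right (by linarith), mul_zero]
      rw [hset]
      have h1 : (1:ℝ)/2 ≤ Phi α := Phi_zero ▸ Phi_mono (by linarith)
      have h2 : (1:ENNReal)/2 = ENNReal.ofReal (1/2) := by
        rw [ENNReal.ofReal_div_of_pos (by norm_num)]
        norm_num
      rw [h2, ← ENNReal.ofReal_toReal (stdG_ne_top (Set.Iic α))]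
      exact ENNReal.ofReal_le_ofReal h1
    · have hset : {x : ℝ | 0 ≤ (Real.sqrt (1 - Phi α))⁻¹ * max (x - α) 0} = Set.univ := by
        ext x
        simp only [Set.mem_setOf_eq, Set.mem_univ, iff_true]
        positivity
      rw [hset, measure_univ]
      exact ENNReal.half_le_self
  · intro t ht
    obtain ⟨V, hVdef⟩ : ∃ V, V = variance
        (fun s => (Real.sqrt (1 - Phi α))⁻¹ * max (s - α) 0) stdGaussianR := ⟨_, rfl⟩
    rw [← hVdef]
    have hV : 1/(112*α^2) ≤ V := hVdef ▸ var_lower hα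
    have hsV : 1/(11*α) ≤ Real.sqrt V := by
      rw [show (1:ℝ)/(11*α) = Real.sqrt ((1/(11*α))^2) from (Real.sqrt_sq (by positivity)).symm]
      apply Real.sqrt_le_sqrt
      calc (1/(11*α))^2 = 1/(121*α^2) := by field_simp; ring
        _ ≤ 1/(112*α^2) :=
            one_div_le_one_div_of_le (by positivity) (by nlinarith)
        _ ≤ V := hV
    have hsV0 : 0 < Real.sqrt V := lt_of_lt_of_le (by positivity) hsV
    have hs0 : 0 < t * Real.sqrt V := mul_pos ht hsV0
    have hset : {x : ℝ | (Real.sqrt (1 - Phi α))⁻¹ * max (x - α) 0 - 0 > t * Real.sqrt V}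
        = Set.Ioi (α + (t * Real.sqrt V) * Real.sqrt (1 - Phi α)) := by
      ext x
      simp only [Set.mem_setOf_eq, Set.mem_Ioi, sub_zero, gt_iff_lt]
      have hkey : (Real.sqrt (1 - Phi α))⁻¹ * ((t * Real.sqrt V) * Real.sqrt (1 - Phi α))
          = t * Real.sqrt V := by field_simp
      constructor
      · intro h
        have h2 : (t * Real.sqrt V) * Real.sqrt (1 - Phi α) < max (x - α) 0 := by
          by_contra hc
          push_neg at hc
          have h4 := mul_le_mul_of_nonneg_left hc hk.le
          rw [hkey] at h4
          linarith
        rcases lt_max_iff.1 h2 with h3 | h3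
        · linarith
        · exfalso; linarith [mul_pos hs0 hsq]
      · intro h
        have h2 : (t * Real.sqrt V) * Real.sqrt (1 - Phi α) < x - α := by linarith
        have h3 : (t * Real.sqrt V) * Real.sqrt (1 - Phi α) < max (x - α) 0 :=
          lt_max_iff.2 (Or.inl h2)
        calc t * Real.sqrt V = (Real.sqrt (1 - Phi α))⁻¹
              * ((t * Real.sqrt V) * Real.sqrt (1 - Phi α)) := hkey.symm
          _ < (Real.sqrt (1 - Phi α))⁻¹ * max (x - α) 0 := (mul_lt_mul_iff_right₀ hk).2 h3
    rw [hset, ← one_sub_Phi]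
    have harg : (1:ℝ)/11 * t / (α * (Real.sqrt (1 - Phi α))⁻¹)
        = t * Real.sqrt (1 - Phi α) / (11 * α) := by
      rw [eq_div_iff (by positivity)]
      field_simp
    rw [harg]
    have hmono : Phi (α + t * Real.sqrt (1 - Phi α) / (11 * α))
        ≤ Phi (α + (t * Real.sqrt V) * Real.sqrt (1 - Phi α)) := by
      apply Phi_mono
      have : t * Real.sqrt (1 - Phi α) / (11 * α)
          ≤ (t * Real.sqrt V) * Real.sqrt (1 - Phi α) := by
        rw [div_le_iff₀ (by positivity)]
        have h1 : t * Real.sqrt (1 - Phi α) * (1/(11*α)) ≤ t * Real.sqrt (1 - Phi α) * Real.sqrt V :=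
          mul_le_mul_of_nonneg_left hsV (by positivity)
        calc t * Real.sqrt (1 - Phi α) = t * Real.sqrt (1 - Phi α) * (1/(11*α)) * (11*α) := by
              field_simp
          _ ≤ t * Real.sqrt (1 - Phi α) * Real.sqrt V * (11*α) :=
              mul_le_mul_of_nonneg_right h1 (by positivity)
          _ = t * Real.sqrt V * Real.sqrt (1 - Phi α) * (11 * α) := by ring
      linarith
    linarith
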